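/- Let Γ be a subgroup of SL₂(ℤ) which is a free group and in which every non-identity element is hyperbolic (|Tr| > 2), and let A ∈ Γ with A ≠ 1. Then there exist a linear form f : ℝ³ → ℝ and a nonzero vector v ∈ ℝ³ such that for all g ∈ Γ: (1) f(φ(g)·v) ≥ 0, and (2) f(φ(g)·v) = 0 if and only if g commutes with A. Here φ : SL₂(ℝ) → SL₃(ℝ) is the homomorphism given by the conjugation action on trace-zero 2×2 matrices. -/

import Mathlib

/-- The homomorphism `φ : SL₂(ℝ) → M₃(ℝ)` given by the conjugation action on
trace-zero `2 × 2` matrices `[[x, y], [z, -x]] ↔ (x, y, z)`. -/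
def phi (A : Matrix.SpecialLinearGroup (Fin 2) ℝ) : Matrix (Fin 3) (Fin 3) ℝ :=
  !![A.val 0 0 * A.val 1 1 + A.val 0 1 * A.val 1 0,
      -(A.val 0 0 * A.val 1 0), A.val 0 1 * A.val 1 1;
    -(2 * A.val 0 0 * A.val 0 1), (A.val 0 0) ^ 2, -((A.val 0 1) ^ 2);
    2 * A.val 1 0 * A.val 1 1, -((A.val 1 0) ^ 2), (A.val 1 1) ^ 2]

/-- The inclusion `SL₂(ℤ) → SL₂(ℝ)`. -/
def toReal : Matrix.SpecialLinearGroup (Fin 2) ℤ →*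
    Matrix.SpecialLinearGroup (Fin 2) ℝ :=
  Matrix.SpecialLinearGroup.map (Int.castRingHom ℝ)

/-- The fundamental algebraic identity: applying the form dual to the
lightlike vector of `p` to `φ(M)` applied to the lightlike vector of `p`
gives the square of the wedge of `M p` with `p`. -/
lemma key_identity (M : Matrix.SpecialLinearGroup (Fin 2) ℝ) (p : Fin 2 → ℝ) :
    2 * p 0 * p 1 * ((phi M).mulVec ![-(p 0 * p 1), (p 0)^2, -((p 1)^2)] 0)
      + (p 1)^2 * ((phi M).mulVec ![-(p 0 * p 1), (p 0)^2, -((p 1)^2)] 1)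
      - (p 0)^2 * ((phi M).mulVec ![-(p 0 * p 1), (p 0)^2, -((p 1)^2)] 2)
    = ((M.val.mulVec p 0) * p 1 - (M.val.mulVec p 1) * p 0)^2 := by
  simp [phi, Matrix.mulVec, dotProduct, Fin.sum_univ_three, Fin.sum_univ_two]
  ring

set_option maxHeartbeats 1000000 in
/-- **A linear form detecting the centralizer.**
Let `Γ ≤ SL₂(ℤ)` be free with all non-identity elements hyperbolic and let
`A ∈ Γ`, `A ≠ 1`.  Then there are a linear form `f : ℝ³ → ℝ` and a nonzero
vector `v ∈ ℝ³` such that for all `g ∈ Γ`: (1) `f (φ(g) · v) ≥ 0`, and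
(2) `f (φ(g) · v) = 0` iff `g` commutes with `A`. -/
theorem exists_linear_form_detecting_centralizer
    (Γ : Subgroup (Matrix.SpecialLinearGroup (Fin 2) ℤ)) [IsFreeGroup Γ]
    (hhyp : ∀ g ∈ Γ, g ≠ 1 → 2 < |Matrix.trace (g : Matrix (Fin 2) (Fin 2) ℤ)|)
    (A : Matrix.SpecialLinearGroup (Fin 2) ℤ) (hAΓ : A ∈ Γ) (hA1 : A ≠ 1) :
    ∃ (f : (Fin 3 → ℝ) →ₗ[ℝ] ℝ) (v : Fin 3 → ℝ), v ≠ 0 ∧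
      ∀ g ∈ Γ,
        0 ≤ f ((phi (toReal g)).mulVec v) ∧
          (f ((phi (toReal g)).mulVec v) = 0 ↔ Commute g A) := by
  classical
  have hAt : 2 < |Matrix.trace (A : Matrix (Fin 2) (Fin 2) ℤ)| := hhyp A hAΓ hA1
  set t : ℝ := ((Matrix.trace (A : Matrix (Fin 2) (Fin 2) ℤ) : ℤ) : ℝ) with htdef
  have ht2 : (2 : ℝ) < |t| := by
    rw [htdef, ← Int.cast_abs]
    exact_mod_cast hAt
  have ht4 : (0:ℝ) < t^2 - 4 := by
    have h1 : (2:ℝ) < |t| := ht2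
    have h2 : |t|^2 = t^2 := sq_abs t
    nlinarith [abs_nonneg t]
  set l : ℝ := (t + Real.sqrt (t^2 - 4)) / 2 with hldef
  have hsq : Real.sqrt (t^2 - 4) ^ 2 = t^2 - 4 := Real.sq_sqrt ht4.le
  have hchar : l^2 - t*l + 1 = 0 := by
    rw [hldef]; linear_combination hsq / 4
  have hl1 : l^2 ≠ 1 := by
    intro h
    have h2 : (l - 1) * (l + 1) = 0 := by linear_combination h
    rcases mul_eq_zero.mp h2 with h3 | h3
    · have hl : l = 1 := by linarith
      have : t = 2 := by
        have := hchar; rw [hl] at this; linarith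
      rw [this] at ht2; norm_num at ht2
    · have hl : l = -1 := by linarith
      have : t = -2 := by
        have := hchar; rw [hl] at this; linarith
      rw [this] at ht2; norm_num at ht2
  have hl0 : l ≠ 0 := by
    intro h; rw [h] at hchar; norm_num at hchar
  set Am : Matrix (Fin 2) (Fin 2) ℝ := ((toReal A : Matrix.SpecialLinearGroup (Fin 2) ℝ) :
      Matrix (Fin 2) (Fin 2) ℝ) with hAmdef
  have hAmap : ∀ i j, Am i j = ((A : Matrix (Fin 2) (Fin 2) ℤ) i j : ℝ) := by
    intro i j
    simp [hAmdef, toReal, Matrix.SpecialLinearGroup.map_apply_coe]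
  have hdetA : Am.det = 1 := (toReal A).property
  have htrA : Am 0 0 + Am 1 1 = t := by
    rw [hAmap, hAmap, htdef]
    rw [Matrix.trace_fin_two]
    push_cast
    ring
  have hdet0 : (Am - l • 1).det = 0 := by
    have hd : Am 0 0 * Am 1 1 - Am 0 1 * Am 1 0 = 1 := by
      rw [← Matrix.det_fin_two]; exact hdetA
    rw [Matrix.det_fin_two]
    simp only [Matrix.sub_apply, Matrix.smul_apply, Matrix.one_apply_eq,
      Matrix.one_apply_ne (by norm_num : (0 : Fin 2) ≠ 1),
      Matrix.one_apply_ne (by norm_num : (1 : Fin 2) ≠ 0), smul_eq_mul]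
    linear_combination hd - l * htrA + hchar
  obtain ⟨p, hp0, hp⟩ := Matrix.exists_mulVec_eq_zero_iff.mpr hdet0
  have hAp : Am.mulVec p = l • p := by
    have h := hp
    rwa [Matrix.sub_mulVec, Matrix.smul_mulVec, Matrix.one_mulVec,
      sub_eq_zero] at h
  have hpcomp : p 0 ≠ 0 ∨ p 1 ≠ 0 := by
    by_contra h
    push_neg at h
    exact hp0 (funext fun i => by fin_cases i <;> simp [h.1, h.2])
  set f : (Fin 3 → ℝ) →ₗ[ℝ] ℝ :=
    { toFun := fun w => 2 * p 0 * p 1 * w 0 + (p 1)^2 * w 1 - (p 0)^2 * w 2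
      map_add' := by intro x y; simp only [Pi.add_apply]; ring
      map_smul' := by intro c x; simp only [Pi.smul_apply, smul_eq_mul,
        RingHom.id_apply]; ring } with hfdef
  have hfapp : ∀ w : Fin 3 → ℝ,
      f w = 2 * p 0 * p 1 * w 0 + (p 1)^2 * w 1 - (p 0)^2 * w 2 := fun w => rfl
  refine ⟨f, ![-(p 0 * p 1), (p 0)^2, -((p 1)^2)], ?_, ?_⟩
  · intro h
    rcases hpcomp with h0 | h1
    · have h2 := congrFun h 1
      simp at h2
      exact h0 h2
    · have h2 := congrFun h 2
      simp at h2
      exact h1 h2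
  intro g hg
  set Gm : Matrix (Fin 2) (Fin 2) ℝ := ((toReal g : Matrix.SpecialLinearGroup (Fin 2) ℝ) :
      Matrix (Fin 2) (Fin 2) ℝ) with hGmdef
  have key : f ((phi (toReal g)).mulVec ![-(p 0 * p 1), (p 0)^2, -((p 1)^2)])
      = ((Gm.mulVec p 0) * p 1 - (Gm.mulVec p 1) * p 0)^2 := by
    rw [hfapp]
    exact key_identity (toReal g) p
  rw [key]
  refine ⟨sq_nonneg _, ?_⟩
  rw [sq_eq_zero_iff]
  constructor
  · -- zero wedge implies commute
    intro hzero
    -- q := Gm.mulVec p is proportional to p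
    obtain ⟨c, hq0, hq1⟩ : ∃ c : ℝ, Gm.mulVec p 0 = c * p 0 ∧ Gm.mulVec p 1 = c * p 1 := by
      rcases hpcomp with h0 | h1
      · refine ⟨Gm.mulVec p 0 / p 0, ?_, ?_⟩
        · field_simp
        · rw [div_mul_eq_mul_div, eq_div_iff h0]
          linear_combination -hzero
      · refine ⟨Gm.mulVec p 1 / p 1, ?_, ?_⟩
        · rw [div_mul_eq_mul_div, eq_div_iff h1]
          linear_combination hzero
        · field_simp
    have hq : Gm.mulVec p = c • p := by
      funext i
      fin_cases i
      · simpa using hq0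
      · simpa using hq1
    -- inverse matrices
    set Gi : Matrix (Fin 2) (Fin 2) ℝ := (((toReal g)⁻¹ : Matrix.SpecialLinearGroup (Fin 2) ℝ) :
        Matrix (Fin 2) (Fin 2) ℝ) with hGidef
    set Ai : Matrix (Fin 2) (Fin 2) ℝ := (((toReal A)⁻¹ : Matrix.SpecialLinearGroup (Fin 2) ℝ) :
        Matrix (Fin 2) (Fin 2) ℝ) with hAidef
    have hGiG : Gi * Gm = 1 := by
      rw [hGidef, hGmdef, ← Matrix.SpecialLinearGroup.coe_mul, inv_mul_cancel,
        Matrix.SpecialLinearGroup.coe_one]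
    have hAiA : Ai * Am = 1 := by
      rw [hAidef, hAmdef, ← Matrix.SpecialLinearGroup.coe_mul, inv_mul_cancel,
        Matrix.SpecialLinearGroup.coe_one]
    have hc0 : c ≠ 0 := by
      intro h
      rw [h, zero_smul] at hq
      apply hp0
      calc p = (Gi * Gm).mulVec p := by rw [hGiG, Matrix.one_mulVec]
        _ = Gi.mulVec (Gm.mulVec p) := by rw [← Matrix.mulVec_mulVec]
        _ = 0 := by rw [hq, Matrix.mulVec_zero]
    have hGip : Gi.mulVec p = c⁻¹ • p := by
      have h1 : Gi.mulVec (Gm.mulVec p) = p := by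
        rw [Matrix.mulVec_mulVec, hGiG, Matrix.one_mulVec]
      rw [hq, Matrix.mulVec_smul] at h1
      rw [eq_comm, inv_smul_eq_iff₀ hc0]
      exact h1.symm
    have hAip : Ai.mulVec p = l⁻¹ • p := by
      have h1 : Ai.mulVec (Am.mulVec p) = p := by
        rw [Matrix.mulVec_mulVec, hAiA, Matrix.one_mulVec]
      rw [hAp, Matrix.mulVec_smul] at h1
      rw [eq_comm, inv_smul_eq_iff₀ hl0]
      exact h1.symm
    -- the commutator
    set E : Matrix.SpecialLinearGroup (Fin 2) ℤ := g * A * g⁻¹ * A⁻¹ with hEdef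
    have hEΓ : E ∈ Γ := mul_mem (mul_mem (mul_mem hg hAΓ) (inv_mem hg)) (inv_mem hAΓ)
    have hEcoe : ((toReal E : Matrix.SpecialLinearGroup (Fin 2) ℝ) :
        Matrix (Fin 2) (Fin 2) ℝ) = Gm * Am * Gi * Ai := by
      rw [hEdef]
      simp only [map_mul, map_inv, Matrix.SpecialLinearGroup.coe_mul]
      rfl
    have hEp : ((toReal E : Matrix.SpecialLinearGroup (Fin 2) ℝ) :
        Matrix (Fin 2) (Fin 2) ℝ).mulVec p = p := by
      rw [hEcoe]
      calc (Gm * Am * Gi * Ai).mulVec p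
          = Gm.mulVec (Am.mulVec (Gi.mulVec (Ai.mulVec p))) := by
            rw [← Matrix.mulVec_mulVec, ← Matrix.mulVec_mulVec, ← Matrix.mulVec_mulVec]
        _ = Gm.mulVec (Am.mulVec (Gi.mulVec (l⁻¹ • p))) := by rw [hAip]
        _ = Gm.mulVec (Am.mulVec (l⁻¹ • (c⁻¹ • p))) := by
            rw [Matrix.mulVec_smul, hGip]
        _ = l⁻¹ • Gm.mulVec (Am.mulVec (c⁻¹ • p)) := by
            rw [Matrix.mulVec_smul, Matrix.mulVec_smul]
        _ = l⁻¹ • Gm.mulVec (c⁻¹ • (l • p)) := by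
            rw [Matrix.mulVec_smul, hAp]
        _ = l⁻¹ • (c⁻¹ • (l • (c • p))) := by
            rw [Matrix.mulVec_smul, Matrix.mulVec_smul, hq]
        _ = p := by
            rw [smul_smul, smul_smul, smul_smul,
              show l⁻¹ * c⁻¹ * l * c = 1 by field_simp, one_smul]
    have hdetE1 : (((toReal E : Matrix.SpecialLinearGroup (Fin 2) ℝ) :
        Matrix (Fin 2) (Fin 2) ℝ) - 1).det = 0 := by
      apply Matrix.exists_mulVec_eq_zero_iff.mp
      exact ⟨p, hp0, by rw [Matrix.sub_mulVec, hEp, Matrix.one_mulVec, sub_self]⟩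
    set Em : Matrix (Fin 2) (Fin 2) ℝ := ((toReal E : Matrix.SpecialLinearGroup (Fin 2) ℝ) :
        Matrix (Fin 2) (Fin 2) ℝ) with hEmdef
    have hdetE : Em.det = 1 := (toReal E).property
    have htrE : Em 0 0 + Em 1 1 = 2 := by
      have hd : Em 0 0 * Em 1 1 - Em 0 1 * Em 1 0 = 1 := by
        rw [← Matrix.det_fin_two]; exact hdetE
      have h2 : (Em 0 0 - 1) * (Em 1 1 - 1) - Em 0 1 * Em 1 0 = 0 := by
        have := hdetE1
        rw [Matrix.det_fin_two] at this
        simpa [Matrix.sub_apply, Matrix.one_apply] using this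
      linear_combination hd - h2
    have htrEZ : Matrix.trace (E : Matrix (Fin 2) (Fin 2) ℤ) = 2 := by
      have hEmap : ∀ i j, Em i j = ((E : Matrix (Fin 2) (Fin 2) ℤ) i j : ℝ) := by
        intro i j
        simp [hEmdef, toReal, Matrix.SpecialLinearGroup.map_apply_coe]
      have := htrE
      rw [hEmap, hEmap] at this
      rw [Matrix.trace_fin_two]
      exact_mod_cast this
    have hE1 : E = 1 := by
      by_contra hne
      have := hhyp E hEΓ hne
      rw [htrEZ] at this
      norm_num at this
    have : g * A = A * g := by
      have h1 : g * A * g⁻¹ * A⁻¹ = 1 := hE1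
      calc g * A = (g * A * g⁻¹ * A⁻¹) * (A * g) := by group
        _ = A * g := by rw [h1, one_mul]
    exact this
  · -- commute implies zero wedge
    intro hcomm
    have hGAm : Gm * Am = Am * Gm := by
      have h1 : toReal (g * A) = toReal (A * g) := congrArg toReal hcomm
      rw [map_mul, map_mul] at h1
      have h2 := congrArg (Subtype.val) h1
      simpa [Matrix.SpecialLinearGroup.coe_mul] using h2
    set u : Fin 2 → ℝ := Gm.mulVec p with hudef
    have hu : Am.mulVec u = l • u := by
      rw [hudef, Matrix.mulVec_mulVec, ← hGAm, ← Matrix.mulVec_mulVec, hAp,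
        Matrix.mulVec_smul]
    by_contra hδ
    have e1 : Am 0 0 * p 0 + Am 0 1 * p 1 = l * p 0 := by
      have h := congrFun hAp 0
      simpa [Matrix.mulVec, dotProduct, Fin.sum_univ_two] using h
    have e2 : Am 1 0 * p 0 + Am 1 1 * p 1 = l * p 1 := by
      have h := congrFun hAp 1
      simpa [Matrix.mulVec, dotProduct, Fin.sum_univ_two] using h
    have e3 : Am 0 0 * u 0 + Am 0 1 * u 1 = l * u 0 := by
      have h := congrFun hu 0
      simpa [Matrix.mulVec, dotProduct, Fin.sum_univ_two] using h
    have e4 : Am 1 0 * u 0 + Am 1 1 * u 1 = l * u 1 := by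
      have h := congrFun hu 1
      simpa [Matrix.mulVec, dotProduct, Fin.sum_univ_two] using h
    have h00 : Am 0 0 = l := by
      have hz : (Am 0 0 - l) * (u 0 * p 1 - u 1 * p 0) = 0 := by
        linear_combination p 1 * e3 - u 1 * e1
      rcases mul_eq_zero.mp hz with h | h
      · linarith
      · exact absurd h hδ
    have h01 : Am 0 1 = 0 := by
      have hz : Am 0 1 * (u 0 * p 1 - u 1 * p 0) = 0 := by
        linear_combination u 0 * e1 - p 0 * e3
      rcases mul_eq_zero.mp hz with h | h
      · exact h
      · exact absurd h hδ
    have h10 : Am 1 0 = 0 := by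
      have hz : Am 1 0 * (u 0 * p 1 - u 1 * p 0) = 0 := by
        linear_combination p 1 * e4 - u 1 * e2
      rcases mul_eq_zero.mp hz with h | h
      · exact h
      · exact absurd h hδ
    have h11 : Am 1 1 = l := by
      have hz : (Am 1 1 - l) * (u 0 * p 1 - u 1 * p 0) = 0 := by
        linear_combination u 0 * e2 - p 0 * e4
      rcases mul_eq_zero.mp hz with h | h
      · linarith
      · exact absurd h hδ
    apply hl1
    have hd : Am 0 0 * Am 1 1 - Am 0 1 * Am 1 0 = 1 := by
      rw [← Matrix.det_fin_two]; exact hdetA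
    rw [h00, h01, h10, h11] at hd
    linear_combination hd
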